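/- Let p be an odd prime, γ a self-conjugate p-core, and let 1 ≤ i ≤ j ≤ p−1 with i < p−1. Then ⌈i−1,j⌋ ⊴ ⌈i,j⌋ in the dominance order; and if moreover j ≤ p−2, then ⌈i−1,j⌋ ⊴ ⌈i−1,j+1⌋. -/

import Mathlib

namespace ArxivW2

/-- A partition of a natural number, given by its (weakly decreasing, finitely
supported) sequence of parts, `part i` being the `(i+1)`-st part. -/
structure PartitionNat : Type where
  part : ℕ → ℕ
  antitone : Antitone part
  finite_support : (Function.support part).Finite

namespace PartitionNat

/-- The rank `|λ|` of a partition: the sum of its parts. -/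
noncomputable def size (μ : PartitionNat) : ℕ := ∑ᶠ i, μ.part i

/-- The number of nonzero parts of a partition. -/
noncomputable def len (μ : PartitionNat) : ℕ := (Function.support μ.part).ncard

/-- The `(j+1)`-st part of the conjugate partition: `λ'_{j+1} = #{i : λ_i ≥ j+1}`. -/
noncomputable def conj (μ : PartitionNat) (j : ℕ) : ℕ := {i : ℕ | j + 1 ≤ μ.part i}.ncard

/-- A partition is self-conjugate if it equals its conjugate. -/
def SelfConj (μ : PartitionNat) : Prop := ∀ j, μ.part j = μ.conj j

/-- `(i, j)` (0-indexed) is a node of the Young diagram of `μ`. -/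
def IsNode (μ : PartitionNat) (i j : ℕ) : Prop := j < μ.part i

/-- The hook length of the (0-indexed) node `(i,j)`:
`h = λ_{i+1} + λ'_{j+1} − (i+1) − (j+1) + 1`. -/
noncomputable def hook (μ : PartitionNat) (i j : ℕ) : ℕ := μ.part i + μ.conj j - (i + j + 1)

/-- A partition is a `p`-core if no hook length of a node is divisible by `p`. -/
def IsCore (p : ℕ) (μ : PartitionNat) : Prop := ∀ i j, μ.IsNode i j → ¬ p ∣ μ.hook i j

/-- The `p`-weight of a partition: the number of nodes whose hook length is
divisible by `p`. -/
noncomputable def pweight (p : ℕ) (μ : PartitionNat) : ℕ :=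
  {x : ℕ × ℕ | μ.IsNode x.1 x.2 ∧ p ∣ μ.hook x.1 x.2}.ncard

/-- The `N`-bead beta-set `B_N(λ) = {λ_i + N − i : 1 ≤ i ≤ N}` of a partition
(meaningful when `N ≥ len λ`). -/
def betaSet (N : ℕ) (μ : PartitionNat) : Finset ℕ :=
  (Finset.range N).image fun i => μ.part i + (N - 1 - i)

/-- A partition is `p`-regular if no nonzero part is repeated `p` or more times. -/
def Regular (p : ℕ) (μ : PartitionNat) : Prop :=
  ∀ i, μ.part i ≠ 0 → μ.part (i + p - 1) < μ.part i

end PartitionNat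

open PartitionNat

/-- `γ` is the `p`-core of `lam`: `γ` is a `p`-core, and for some `N` at least the
number of parts of both, the `N`-bead beta-sets of `lam` and `γ` have the same number
of elements in each residue class mod `p`. -/
def HasCore (p : ℕ) (lam gam : PartitionNat) : Prop :=
  IsCore p gam ∧ ∃ N : ℕ, lam.len ≤ N ∧ gam.len ≤ N ∧ ∀ r : ℕ,
    ((betaSet N lam).filter fun b => b % p = r).card =
      ((betaSet N gam).filter fun b => b % p = r).card

/-- Membership in the `p`-block of weight `w` with `p`-core `gam`. -/
def InBlock (p w : ℕ) (gam lam : PartitionNat) : Prop :=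
  lam.size = gam.size + w * p ∧ HasCore p lam gam

/-- The dominance order: `lam ⊴ mu`. -/
def Dom (lam mu : PartitionNat) : Prop :=
  ∀ k : ℕ, ∑ i ∈ Finset.range k, lam.part i ≤ ∑ i ∈ Finset.range k, mu.part i

/-- `mu` is obtained from `lam` by removing a `p`-rim-hook of leg length `l`. -/
def RemoveHook (p : ℕ) (lam mu : PartitionNat) (l : ℕ) : Prop :=
  ∃ N b : ℕ, lam.len ≤ N ∧ mu.len ≤ N ∧ b ∈ betaSet N lam ∧ p ≤ b ∧
    b - p ∉ betaSet N lam ∧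
    betaSet N mu = insert (b - p) (betaSet N lam \ {b}) ∧
    l = ((betaSet N lam).filter fun x => b - p < x ∧ x < b).card

/-- `lam` belongs to the set `∂_l` of the weight-2 block of `gam`:
it lies in the block and some (equivalently, every) two-step `p`-rim-hook removal
sequence from `lam` down to `gam` has leg lengths `l₁, l₂` with `|l₁ − l₂| = l`. -/
def DelClass (p : ℕ) (gam : PartitionNat) (l : ℕ) (lam : PartitionNat) : Prop :=
  InBlock p 2 gam lam ∧ ∃ mu l1 l2, RemoveHook p lam mu l1 ∧ RemoveHook p mu gam l2 ∧
    max l1 l2 - min l1 l2 = l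

/-- `ρ 0 < ρ 1 < ⋯ < ρ (p−1)` is the increasing enumeration of the maxima of the
residue classes mod `p` in the `N`-bead beta-set of `gam`. -/
def IsRho (p N : ℕ) (gam : PartitionNat) (ρ : ℕ → ℕ) : Prop :=
  (∀ i j, i < j → j < p → ρ i < ρ j) ∧
  (∀ i, i < p → ρ i ∈ betaSet N gam ∧ ∀ b ∈ betaSet N gam, b % p = ρ i % p → b ≤ ρ i) ∧
  (∀ r, r < p → ∃ i, i < p ∧ ρ i % p = r)

/-- The beta-set of the partition `⟨i,j⟩` (`i < j`). -/
def pairBeta (p : ℕ) (B : Finset ℕ) (ρ : ℕ → ℕ) (i j : ℕ) : Finset ℕ :=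
  (B \ {ρ i, ρ j}) ∪ {ρ i + p, ρ j + p}

/-- The beta-set of the partition `⟨i⟩`. -/
def oneBeta (p : ℕ) (B : Finset ℕ) (ρ : ℕ → ℕ) (i : ℕ) : Finset ℕ :=
  (B \ {ρ i}) ∪ {ρ i + 2 * p}

/-- The beta-set of the partition `⟨i²⟩`. -/
def sqBeta (p : ℕ) (B : Finset ℕ) (ρ : ℕ → ℕ) (i : ℕ) : Finset ℕ :=
  (B \ {ρ i - p}) ∪ {ρ i + p}

/-- The pyramid entry `γ_{ij}` of the block, extended by `1` for `i > j` and `0`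
for `j ≥ p`. -/
def pyr (p : ℕ) (ρ : ℕ → ℕ) (i j : ℕ) : ℕ :=
  if j < i then 1 else if p ≤ j then 0 else if ρ j - ρ i < p then 1 else 0

/-- The beta-set of Fayers' partition `⌈i,j⌋` (for `0 ≤ i ≤ j ≤ p−1`, `i < p−1`),
defined by cases on the pyramid entries. -/
def fayersBeta (p : ℕ) (B : Finset ℕ) (ρ : ℕ → ℕ) (i j : ℕ) : Finset ℕ :=
  if i = j then
    (if pyr p ρ (i + 1) (i + 2) = 1 then pairBeta p B ρ (i + 1) (i + 2)
     else oneBeta p B ρ (i + 1))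
  else
    if pyr p ρ i (j + 1) = 1 then pairBeta p B ρ i (j + 1)
    else if pyr p ρ i j = 1 then oneBeta p B ρ i
    else if pyr p ρ (i + 1) j = 1 then sqBeta p B ρ j
    else pairBeta p B ρ (i + 1) j

/-- The set of `p`-BG-partitions in the block of weight `w` with core `gam`:
self-conjugate partitions in the block none of whose diagonal hook lengths is
divisible by `p`. -/
def BGset (p w : ℕ) (gam : PartitionNat) : Set PartitionNat :=
  {lam | InBlock p w gam lam ∧ SelfConj lam ∧ ∀ i, lam.IsNode i i → ¬ p ∣ lam.hook i i}


section Aux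

open Finset

namespace PartitionNat

lemma part_eq_zero_of_len_le {μ : PartitionNat} {i : ℕ} (h : μ.len ≤ i) : μ.part i = 0 := by
  by_contra hne
  have hsub : (↑(Finset.range (i+1)) : Set ℕ) ⊆ Function.support μ.part := by
    intro j hj
    simp only [Finset.coe_range, Set.mem_Iio] at hj
    have h2 : μ.part i ≤ μ.part j := μ.antitone (by omega)
    simp only [Function.mem_support]
    omega
  have h1 : (i+1) ≤ μ.len := by
    have h2 := Set.ncard_le_ncard hsub μ.finite_support
    rw [Set.ncard_coe_finset, Finset.card_range] at h2
    exact h2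
  omega

lemma mem_betaSet {N : ℕ} {μ : PartitionNat} {b : ℕ} :
    b ∈ betaSet N μ ↔ ∃ i, i < N ∧ μ.part i + (N - 1 - i) = b := by
  simp [betaSet, Finset.mem_image, Finset.mem_range]

lemma beta_strictAnti {μ : PartitionNat} {N i j : ℕ} (hij : i < j) (hj : j < N) :
    μ.part j + (N - 1 - j) < μ.part i + (N - 1 - i) := by
  have h := μ.antitone (le_of_lt hij); omega

lemma beta_injOn (μ : PartitionNat) (N : ℕ) :
    Set.InjOn (fun i => μ.part i + (N - 1 - i)) (Finset.range N) := by
  intro a ha b hb hab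
  simp only [Finset.coe_range, Set.mem_Iio] at ha hb
  simp only [] at hab
  rcases lt_trichotomy a b with h | h | h
  · have := beta_strictAnti (μ := μ) h hb; omega
  · exact h
  · have := beta_strictAnti (μ := μ) h ha; omega

lemma card_betaSet (μ : PartitionNat) (N : ℕ) : (betaSet N μ).card = N := by
  rw [betaSet, Finset.card_image_of_injOn (beta_injOn μ N), Finset.card_range]

end PartitionNat

open PartitionNat

/-- number of elements of `X` greater than `t` -/
def wcnt (X : Finset ℕ) (t : ℕ) : ℕ := (X.filter (fun x => t < x)).card

lemma wcnt_mono (X : Finset ℕ) {s t : ℕ} (h : s ≤ t) : wcnt X t ≤ wcnt X s := by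
  apply Finset.card_le_card
  intro x hx
  simp only [wcnt, Finset.mem_filter] at *
  exact ⟨hx.1, lt_of_le_of_lt h hx.2⟩

lemma wcnt_le (X : Finset ℕ) (t : ℕ) : wcnt X t ≤ X.card :=
  Finset.card_le_card (Finset.filter_subset _ _)

lemma wcnt_lower {X : Finset ℕ} {n : ℕ} (h : X.card = n) (t : ℕ) : n ≤ wcnt X t + t + 1 := by
  have h2 : (X.filter (fun x => ¬ t < x)).card ≤ t + 1 := by
    refine le_trans (Finset.card_le_card (t := Finset.range (t+1)) ?_) (by simp)
    intro x hx; simp only [Finset.mem_filter] at hx; simp only [Finset.mem_range]; omega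
  have h3 := Finset.card_filter_add_card_filter_not (s := X) (p := fun x => t < x)
  unfold wcnt
  omega

lemma downclosed_eq_range {S : Finset ℕ} (h : ∀ i j : ℕ, i ≤ j → j ∈ S → i ∈ S) :
    S = Finset.range S.card := by
  have h1 : ∀ x ∈ S, x < S.card := by
    intro x hx
    have hsub : Finset.range (x+1) ⊆ S := by
      intro y hy
      simp only [Finset.mem_range] at hy
      exact h y x (by omega) hx
    have := Finset.card_le_card hsub
    simp only [Finset.card_range] at this
    omega
  have h2 : ∀ x, x < S.card → x ∈ S := by
    intro x hx
    by_contra hxs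
    have hsub : S ⊆ Finset.range x := by
      intro y hy
      simp only [Finset.mem_range]
      by_contra hyx
      exact hxs (h x y (by omega) hy)
    have := Finset.card_le_card hsub
    simp only [Finset.card_range] at this
    omega
  ext x
  simp only [Finset.mem_range]
  exact ⟨h1 x, h2 x⟩

lemma filter_beta_eq_range {μ : PartitionNat} {N : ℕ} (t : ℕ) :
    (Finset.range N).filter (fun i => t < μ.part i + (N - 1 - i)) =
      Finset.range (wcnt (betaSet N μ) t) := by
  have hcard : ((Finset.range N).filter (fun i => t < μ.part i + (N - 1 - i))).card
      = wcnt (betaSet N μ) t := by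
    unfold wcnt
    rw [betaSet, Finset.filter_image,
      Finset.card_image_of_injOn ((beta_injOn μ N).mono (Finset.coe_subset.mpr (Finset.filter_subset _ _)))]
  rw [← hcard]
  apply downclosed_eq_range
  intro a b hab hb
  simp only [Finset.mem_filter, Finset.mem_range] at *
  constructor
  · omega
  · have := μ.antitone hab
    omega

lemma partialSum_eq {μ : PartitionNat} {N M k : ℕ} (hlen : μ.len ≤ N)
    (hM : ∀ b ∈ betaSet N μ, b < M) :
    ∑ i ∈ Finset.range k, μ.part i =
      ∑ t ∈ Finset.range M, (min k (wcnt (betaSet N μ) t) - (N - 1 - t)) := by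
  have hcle : ∀ t, wcnt (betaSet N μ) t ≤ N := fun t => by
    have := wcnt_le (betaSet N μ) t
    rwa [card_betaSet] at this
  have h0 : ∑ i ∈ Finset.range k, μ.part i = ∑ i ∈ Finset.range (min k N), μ.part i := by
    symm
    apply Finset.sum_subset
    · intro x hx; simp only [Finset.mem_range] at *; omega
    · intro x hx hnx
      simp only [Finset.mem_range] at hx hnx
      exact part_eq_zero_of_len_le (by omega)
  have h1 : ∀ i ∈ Finset.range (min k N), μ.part i =
      ∑ t ∈ Finset.range M, (if N - 1 - i ≤ t ∧ t < μ.part i + (N - 1 - i) then 1 else 0) := by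
    intro i hi
    simp only [Finset.mem_range] at hi
    have hfi : μ.part i + (N - 1 - i) < M := hM _ (mem_betaSet.mpr ⟨i, by omega, rfl⟩)
    rw [← Finset.card_filter]
    have : (Finset.range M).filter
        (fun t => N - 1 - i ≤ t ∧ t < μ.part i + (N - 1 - i)) =
        Finset.Ico (N - 1 - i) (μ.part i + (N - 1 - i)) := by
      ext t
      simp only [Finset.mem_filter, Finset.mem_range, Finset.mem_Ico]
      omega
    rw [this, Nat.card_Ico]
    omega
  rw [h0, Finset.sum_congr rfl h1, Finset.sum_comm]
  apply Finset.sum_congr rfl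
  intro t _
  rw [← Finset.card_filter]
  have key : (Finset.range (min k N)).filter
      (fun i => N - 1 - i ≤ t ∧ t < μ.part i + (N - 1 - i)) =
      Finset.Ico (N - 1 - t) (min (min k N) (wcnt (betaSet N μ) t)) := by
    ext a
    simp only [Finset.mem_filter, Finset.mem_range, Finset.mem_Ico]
    constructor
    · rintro ⟨ha1, ha2, ha3⟩
      refine ⟨by omega, lt_min ha1 ?_⟩
      have : a ∈ Finset.range (wcnt (betaSet N μ) t) := by
        rw [← filter_beta_eq_range t]
        simp only [Finset.mem_filter, Finset.mem_range]
        exact ⟨by omega, ha3⟩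
      simpa using this
    · rintro ⟨ha1, ha2⟩
      have hct : a < wcnt (betaSet N μ) t := lt_of_lt_of_le ha2 (min_le_right _ _)
      have : a ∈ (Finset.range N).filter (fun i => t < μ.part i + (N - 1 - i)) := by
        rw [filter_beta_eq_range t]
        simpa using hct
      simp only [Finset.mem_filter, Finset.mem_range] at this
      exact ⟨lt_of_lt_of_le ha2 (min_le_left _ _), by omega, this.2⟩
  rw [key, Nat.card_Ico]
  have := hcle t
  omega

end Aux
section Aux2

open Finset PartitionNat

/-- indicator of the interval `[a, a+L)` -/
def wind (a L t : ℕ) : ℕ := if a ≤ t ∧ t < a + L then 1 else 0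

lemma wind_le_one (a L t : ℕ) : wind a L t ≤ 1 := by unfold wind; split <;> omega

lemma sum_min_sub_le (M N k u w σ : ℕ) (f g : ℕ → ℕ)
    (hwσ : w ≤ σ) (hfit : u + σ + w ≤ M)
    (hout : ∀ t, t < M → (t < u ∨ u + w ≤ t) → (t < u + σ ∨ u + σ + w ≤ t) → f t = g t)
    (hJ : ∀ r, r < w → g (u + r) + 1 = f (u + r))
    (hI : ∀ r, r < w → g (u + σ + r) = f (u + σ + r) + 1)
    (hdec : ∀ r, r < w → f (u + σ + r) < f (u + r))
    (hlow : ∀ t, N ≤ f t + t + 1) :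
    ∑ t ∈ Finset.range M, (min k (f t) - (N - 1 - t)) ≤
      ∑ t ∈ Finset.range M, (min k (g t) - (N - 1 - t)) := by
  set F := fun t => min k (f t) - (N - 1 - t) with hF
  set G := fun t => min k (g t) - (N - 1 - t) with hG
  have hJI : Disjoint (Finset.Ico u (u+w)) (Finset.Ico (u+σ) (u+σ+w)) := by
    rw [Finset.disjoint_left]
    intro a ha hb
    simp only [Finset.mem_Ico] at ha hb
    omega
  have hsub : Finset.Ico u (u+w) ∪ Finset.Ico (u+σ) (u+σ+w) ⊆ Finset.range M := by
    intro x hx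
    simp only [Finset.mem_union, Finset.mem_Ico, Finset.mem_range] at hx ⊢
    omega
  have split : ∀ h : ℕ → ℕ, ∑ t ∈ Finset.range M, h t =
      ∑ t ∈ Finset.range M \ (Finset.Ico u (u+w) ∪ Finset.Ico (u+σ) (u+σ+w)), h t
      + (∑ r ∈ Finset.range w, h (u+r) + ∑ r ∈ Finset.range w, h (u+σ+r)) := by
    intro h
    rw [← Finset.sum_sdiff hsub]
    congr 1
    rw [Finset.sum_union hJI]
    congr 1
    · rw [Finset.sum_Ico_eq_sum_range, show u + w - u = w by omega]
    · rw [Finset.sum_Ico_eq_sum_range, show u + σ + w - (u + σ) = w by omega]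
  rw [split F, split G]
  apply Nat.add_le_add
  · apply le_of_eq
    apply Finset.sum_congr rfl
    intro t ht
    simp only [Finset.mem_sdiff, Finset.mem_union, Finset.mem_Ico, Finset.mem_range,
      not_or, not_and, not_lt] at ht
    have h1 : (t < u ∨ u + w ≤ t) := by omega
    have h2 : (t < u + σ ∨ u + σ + w ≤ t) := by omega
    have := hout t ht.1 h1 h2
    simp only [hF, hG, this]
  · rw [← Finset.sum_add_distrib, ← Finset.sum_add_distrib]
    apply Finset.sum_le_sum
    intro r hr
    simp only [Finset.mem_range] at hr
    have h1 := hJ r hr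
    have h2 := hI r hr
    have h3 := hdec r hr
    have h4 := hlow (u+σ+r)
    simp only [hF, hG]
    omega

lemma move_le (M N k u d L : ℕ) (c ψ : ℕ → ℕ) (hfit : u + d + L ≤ M)
    (hmono : ∀ s t : ℕ, s ≤ t → c t ≤ c s)
    (hlowc : ∀ t, N ≤ c t + t + 1)
    (hkey : ∀ t, u ≤ t → t < u + min d L → c (t + max d L) + ψ (t + max d L) ≤ c t + ψ t) :
    ∑ t ∈ Finset.range M, (min k (c t + ψ t + wind u L t) - (N - 1 - t)) ≤
      ∑ t ∈ Finset.range M, (min k (c t + ψ t + wind (u + d) L t) - (N - 1 - t)) := by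
  have hmm : min d L + max d L = d + L := by omega
  apply sum_min_sub_le M N k u (min d L) (max d L)
    (fun t => c t + ψ t + wind u L t) (fun t => c t + ψ t + wind (u+d) L t)
    (by omega) (by omega)
  · intro t _ h1 h2
    have : wind u L t = wind (u+d) L t := by
      unfold wind; split_ifs <;> omega
    rw [this]
  · intro r hr
    have e1 : wind u L (u+r) = 1 := by unfold wind; split_ifs <;> omega
    have e2 : wind (u+d) L (u+r) = 0 := by unfold wind; split_ifs <;> omega
    rw [e1, e2]
  · intro r hr
    have e1 : wind u L (u + max d L + r) = 0 := by unfold wind; split_ifs <;> omega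
    have e2 : wind (u+d) L (u + max d L + r) = 1 := by unfold wind; split_ifs <;> omega
    rw [e1, e2]
  · intro r hr
    have e1 : wind u L (u + max d L + r) = 0 := by unfold wind; split_ifs <;> omega
    have e2 : wind u L (u+r) = 1 := by unfold wind; split_ifs <;> omega
    rw [e1, e2]
    have := hkey (u+r) (by omega) (by omega)
    have e3 : u + r + max d L = u + max d L + r := by omega
    rw [e3] at this
    have := wind_le_one u L (u + max d L + r)
    omega
  · intro t
    have := hlowc t
    omega

/-- the generic dominance builder -/
lemma dom_build {p N : ℕ} {γ lam1 lam2 : PartitionNat} {ρ : ℕ → ℕ}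
    (hlen1 : lam1.len ≤ N) (hlen2 : lam2.len ≤ N)
    (M : ℕ)
    (hM1 : ∀ b ∈ betaSet N lam1, b < M) (hM2 : ∀ b ∈ betaSet N lam2, b < M)
    (a1 b1 a2 b2 : ℕ)
    (e1 : ∀ t, wcnt (betaSet N lam1) t = wcnt (betaSet N γ) t + wind a1 p t + wind b1 p t)
    (e2 : ∀ t, wcnt (betaSet N lam2) t = wcnt (betaSet N γ) t + wind a2 p t + wind b2 p t)
    (hdrop : ∀ l t, l < p → t < ρ l → wcnt (betaSet N γ) (t + p) + 1 ≤ wcnt (betaSet N γ) t)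
    (hab : a1 ≤ b1) (haa : a1 ≤ a2) (hbb : b1 ≤ b2)
    (hwit : ∃ l, l < p ∧ a2 ≤ ρ l)
    (hfa : a2 + p ≤ M) (hfb : b2 + p ≤ M) :
    Dom lam1 lam2 := by
  intro k
  rw [partialSum_eq hlen1 hM1, partialSum_eq hlen2 hM2]
  set c := fun t => wcnt (betaSet N γ) t with hc
  have hmono : ∀ s t : ℕ, s ≤ t → c t ≤ c s := fun s t h => wcnt_mono _ h
  have hlowc : ∀ t, N ≤ c t + t + 1 := fun t => wcnt_lower (card_betaSet γ N) t
  obtain ⟨l, hl, hal⟩ := hwit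
  calc ∑ t ∈ Finset.range M, (min k (wcnt (betaSet N lam1) t) - (N - 1 - t))
      = ∑ t ∈ Finset.range M, (min k (c t + wind a1 p t + wind b1 p t) - (N - 1 - t)) := by
        apply Finset.sum_congr rfl; intro t _; rw [e1 t]
    _ ≤ ∑ t ∈ Finset.range M, (min k (c t + wind a1 p t + wind (b1 + (b2 - b1)) p t) - (N - 1 - t)) := by
        apply move_le M N k b1 (b2 - b1) p c (fun t => wind a1 p t) (by omega) hmono hlowc
        intro t ht1 ht2
        have e0 : wind a1 p (t + max (b2 - b1) p) = 0 := by
          unfold wind; split_ifs <;> omega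
        rw [e0]
        have := hmono t (t + max (b2 - b1) p) (by omega)
        omega
    _ = ∑ t ∈ Finset.range M, (min k (c t + wind b2 p t + wind a1 p t) - (N - 1 - t)) := by
        apply Finset.sum_congr rfl; intro t _
        have hb2 : b1 + (b2 - b1) = b2 := by omega
        rw [hb2, show c t + wind a1 p t + wind b2 p t = c t + wind b2 p t + wind a1 p t by omega]
    _ ≤ ∑ t ∈ Finset.range M, (min k (c t + wind b2 p t + wind (a1 + (a2 - a1)) p t) - (N - 1 - t)) := by
        apply move_le M N k a1 (a2 - a1) p c (fun t => wind b2 p t) (by omega) hmono hlowc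
        intro t ht1 ht2
        have hd1 : c (t + p) + 1 ≤ c t := hdrop l t hl (by omega)
        have hd2 : c (t + max (a2 - a1) p) ≤ c (t + p) := hmono _ _ (by omega)
        have hd3 := wind_le_one b2 p (t + max (a2 - a1) p)
        omega
    _ = ∑ t ∈ Finset.range M, (min k (wcnt (betaSet N lam2) t) - (N - 1 - t)) := by
        apply Finset.sum_congr rfl; intro t _
        have ha2 : a1 + (a2 - a1) = a2 := by omega
        rw [ha2, e2 t,
          show c t + wind a2 p t + wind b2 p t = c t + wind b2 p t + wind a2 p t by omega]

end Aux2
section Aux3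

open Finset PartitionNat

variable {γ : PartitionNat} {N : ℕ}

lemma beta_filter_above {i : ℕ} (hi : i < N) :
    ((betaSet N γ).filter (fun y => γ.part i + (N - 1 - i) < y)).card = i := by
  rw [betaSet, Finset.filter_image,
    Finset.card_image_of_injOn ((beta_injOn γ N).mono
      (Finset.coe_subset.mpr (Finset.filter_subset _ _)))]
  have : (Finset.range N).filter (fun a => γ.part i + (N - 1 - i) < γ.part a + (N - 1 - a))
      = Finset.range i := by
    ext a
    simp only [Finset.mem_filter, Finset.mem_range]
    constructor
    · rintro ⟨ha, hlt⟩
      by_contra hia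
      have hia' : i ≤ a := by omega
      rcases Nat.eq_or_lt_of_le hia' with h | h
      · rw [h] at hlt; omega
      · have := beta_strictAnti (μ := γ) h ha
        omega
    · intro ha
      exact ⟨by omega, beta_strictAnti (μ := γ) ha hi⟩
  rw [this, Finset.card_range]

lemma beta_filter_below {i : ℕ} (hi : i < N) :
    ((betaSet N γ).filter (fun y => y < γ.part i + (N - 1 - i))).card = N - 1 - i := by
  rw [betaSet, Finset.filter_image,
    Finset.card_image_of_injOn ((beta_injOn γ N).mono
      (Finset.coe_subset.mpr (Finset.filter_subset _ _)))]
  have : (Finset.range N).filter (fun a => γ.part a + (N - 1 - a) < γ.part i + (N - 1 - i))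
      = Finset.Ico (i+1) N := by
    ext a
    simp only [Finset.mem_filter, Finset.mem_range, Finset.mem_Ico]
    constructor
    · rintro ⟨ha, hlt⟩
      by_contra hia
      have hia' : a ≤ i := by omega
      rcases Nat.eq_or_lt_of_le hia' with h | h
      · rw [h] at hlt; omega
      · have := beta_strictAnti (μ := γ) h hi
        omega
    · rintro ⟨h1, h2⟩
      exact ⟨h2, beta_strictAnti (μ := γ) (by omega) h2⟩
  rw [this, Nat.card_Ico]
  omega

lemma gc_part {i : ℕ} (hi : i < N) :
    γ.part i = ((Finset.range (γ.part i + (N - 1 - i))).filter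
      (fun y => y ∉ betaSet N γ)).card := by
  have hsplit := Finset.card_filter_add_card_filter_not
    (s := Finset.range (γ.part i + (N - 1 - i))) (p := fun y => y ∈ betaSet N γ)
  have hmem : (Finset.range (γ.part i + (N - 1 - i))).filter (fun y => y ∈ betaSet N γ)
      = (betaSet N γ).filter (fun y => y < γ.part i + (N - 1 - i)) := by
    ext y
    simp only [Finset.mem_filter, Finset.mem_range]
    tauto
  rw [hmem, beta_filter_below hi, Finset.card_range] at hsplit
  omega

lemma gc_succ {x : ℕ} (hx : x ∉ betaSet N γ) :
    ((Finset.range (x+1)).filter (fun y => y ∉ betaSet N γ)).card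
      = ((Finset.range x).filter (fun y => y ∉ betaSet N γ)).card + 1 := by
  rw [Finset.range_add_one, Finset.filter_insert, if_pos hx,
    Finset.card_insert_of_notMem (by simp)]

lemma gc_mono {x y : ℕ} (h : x ≤ y) :
    ((Finset.range x).filter (fun z => z ∉ betaSet N γ)).card
      ≤ ((Finset.range y).filter (fun z => z ∉ betaSet N γ)).card := by
  apply Finset.card_le_card
  apply Finset.filter_subset_filter
  exact Finset.range_subset_range.mpr h

lemma conj_count (hlen : γ.len ≤ N) {x : ℕ} (hx : x ∉ betaSet N γ) :
    γ.conj (((Finset.range x).filter (fun y => y ∉ betaSet N γ)).card)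
      = ((betaSet N γ).filter (fun y => x < y)).card := by
  set j := ((Finset.range x).filter (fun y => y ∉ betaSet N γ)).card with hj
  have hiff : ∀ i', i' < N → (j + 1 ≤ γ.part i' ↔ x < γ.part i' + (N - 1 - i')) := by
    intro i' hi'
    have hgp := gc_part (γ := γ) hi'
    constructor
    · intro h
      by_contra hle
      have h2 : γ.part i' + (N - 1 - i') ≤ x := by omega
      have h3 := gc_mono (γ := γ) (N := N) h2
      omega
    · intro h
      have h2 : x + 1 ≤ γ.part i' + (N - 1 - i') := by omega
      have h3 := gc_mono (γ := γ) (N := N) h2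
      rw [gc_succ hx] at h3
      omega
  have hset : {i : ℕ | j + 1 ≤ γ.part i}
      = ↑((Finset.range N).filter (fun i' => j + 1 ≤ γ.part i')) := by
    ext i'
    simp only [Set.mem_setOf_eq, Finset.coe_filter, Finset.mem_range]
    constructor
    · intro h
      refine ⟨?_, h⟩
      by_contra hiN
      have : γ.part i' = 0 := part_eq_zero_of_len_le (by omega)
      omega
    · exact fun h => h.2
  rw [conj, hset, Set.ncard_coe_finset]
  have hcong : (Finset.range N).filter (fun i' => j + 1 ≤ γ.part i')
      = (Finset.range N).filter (fun i' => x < γ.part i' + (N - 1 - i')) := by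
    apply Finset.filter_congr
    intro i' hi'
    simp only [Finset.mem_range] at hi'
    exact hiff i' hi'
  rw [hcong]
  rw [betaSet, Finset.filter_image,
    Finset.card_image_of_injOn ((beta_injOn γ N).mono
      (Finset.coe_subset.mpr (Finset.filter_subset _ _)))]

lemma runnerFull {p : ℕ} (hp : 0 < p) (hcore : IsCore p γ) (hlen : γ.len ≤ N) :
    ∀ b ∈ betaSet N γ, p ≤ b → b - p ∈ betaSet N γ := by
  intro b hb hpb
  by_contra hx
  obtain ⟨i, hiN, hfi⟩ := mem_betaSet.mp hb
  set x := b - p with hxdef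
  set j := ((Finset.range x).filter (fun y => y ∉ betaSet N γ)).card with hj
  -- part i in terms of gaps
  have hpart : γ.part i = ((Finset.range b).filter (fun y => y ∉ betaSet N γ)).card := by
    rw [gc_part hiN, hfi]
  -- gaps below b split at x
  have hbsplit : ((Finset.range b).filter (fun y => y ∉ betaSet N γ)).card
      = j + 1 + ((Finset.Ico (x+1) b).filter (fun y => y ∉ betaSet N γ)).card := by
    have h1 : Finset.range b = Finset.range (x+1) ∪ Finset.Ico (x+1) b := by
      rw [Finset.range_eq_Ico, Finset.range_eq_Ico, Finset.Ico_union_Ico_eq_Ico (b := x+1) (c := b) (by omega : (0:ℕ) ≤ x+1) (by omega)]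
    have h2 : Disjoint ((Finset.range (x+1)).filter (fun y => y ∉ betaSet N γ))
        ((Finset.Ico (x+1) b).filter (fun y => y ∉ betaSet N γ)) := by
      rw [Finset.disjoint_left]
      intro a ha hb'
      simp only [Finset.mem_filter, Finset.mem_range, Finset.mem_Ico] at ha hb'
      omega
    rw [h1, Finset.filter_union, Finset.card_union_of_disjoint h2, gc_succ hx]
  -- node
  have hnode : j < γ.part i := by
    rw [hpart, hbsplit]; omega
  -- conj count
  have hconj : γ.conj j = ((Finset.Ico (x+1) b).filter (fun y => y ∈ betaSet N γ)).card + 1 + i := by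
    rw [hj, conj_count hlen hx]
    have hsplit := Finset.card_filter_add_card_filter_not
      (s := (betaSet N γ).filter (fun y => x < y)) (p := fun y => y < b)
    rw [Finset.filter_filter, Finset.filter_filter] at hsplit
    have hlow : (betaSet N γ).filter (fun y => x < y ∧ y < b)
        = (Finset.Ico (x+1) b).filter (fun y => y ∈ betaSet N γ) := by
      ext y
      simp only [Finset.mem_filter, Finset.mem_Ico]
      constructor
      · rintro ⟨h1, h2, h3⟩; exact ⟨⟨by omega, h3⟩, h1⟩
      · rintro ⟨⟨h1, h2⟩, h3⟩; exact ⟨h3, by omega, h2⟩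
    have hhigh : (betaSet N γ).filter (fun y => x < y ∧ ¬ y < b)
        = insert b ((betaSet N γ).filter (fun y => b < y)) := by
      ext y
      simp only [Finset.mem_filter, Finset.mem_insert]
      constructor
      · rintro ⟨h1, h2, h3⟩
        rcases Nat.eq_or_lt_of_le (Nat.le_of_not_lt h3) with h | h
        · left; omega
        · right; exact ⟨h1, h⟩
      · rintro (rfl | ⟨h1, h2⟩)
        · exact ⟨hb, by omega, by omega⟩
        · exact ⟨h1, by omega, by omega⟩
    have hcount : ((betaSet N γ).filter (fun y => b < y)).card = i := by
      have h5 := beta_filter_above (γ := γ) hiN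
      rw [hfi] at h5
      exact h5
    have hbnot : b ∉ (betaSet N γ).filter (fun y => b < y) := by
      simp only [Finset.mem_filter]
      omega
    rw [hlow, hhigh, Finset.card_insert_of_notMem hbnot, hcount] at hsplit
    omega
  -- Ico counts
  have hIco : ((Finset.Ico (x+1) b).filter (fun y => y ∈ betaSet N γ)).card
      + ((Finset.Ico (x+1) b).filter (fun y => y ∉ betaSet N γ)).card = p - 1 := by
    have h6 := Finset.card_filter_add_card_filter_not
      (s := Finset.Ico (x+1) b) (p := fun y => y ∈ betaSet N γ)
    rw [Nat.card_Ico] at h6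
    omega
  -- hook
  have hhook : γ.hook i j = p := by
    unfold hook
    rw [hpart, hbsplit, hconj]
    omega
  exact hcore i j hnode (by rw [hhook])

end Aux3
section Aux4

open Finset PartitionNat

lemma wcnt_sdiff_union {B S T : Finset ℕ} (hS : S ⊆ B) (hT : ∀ y ∈ T, y ∉ B) (t : ℕ) :
    wcnt ((B \ S) ∪ T) t + wcnt S t = wcnt B t + wcnt T t := by
  unfold wcnt
  rw [Finset.filter_union]
  rw [Finset.card_union_of_disjoint (by
    rw [Finset.disjoint_left]
    intro a ha1 ha2
    simp only [Finset.mem_filter, Finset.mem_sdiff] at ha1 ha2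
    exact hT a ha2.1 ha1.1.1)]
  have h1 : (B \ S).filter (fun x => t < x)
      = (B.filter (fun x => t < x)) \ (S.filter (fun x => t < x)) := by
    ext y
    simp only [Finset.mem_filter, Finset.mem_sdiff]
    tauto
  have h2 : S.filter (fun x => t < x) ⊆ B.filter (fun x => t < x) :=
    Finset.filter_subset_filter _ hS
  rw [h1, Finset.card_sdiff_of_subset h2]
  have := Finset.card_le_card h2
  omega

lemma wcnt_singleton (y t : ℕ) : wcnt {y} t = if t < y then 1 else 0 := by
  unfold wcnt
  rw [Finset.filter_singleton]
  split_ifs <;> simp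

lemma wcnt_pair_set {y1 y2 : ℕ} (h : y1 ≠ y2) (t : ℕ) :
    wcnt {y1, y2} t = (if t < y1 then 1 else 0) + (if t < y2 then 1 else 0) := by
  unfold wcnt
  rw [show ({y1, y2} : Finset ℕ) = insert y1 {y2} from rfl, Finset.filter_insert,
    Finset.filter_singleton]
  split_ifs <;> simp_all [Finset.card_insert_of_notMem]

lemma wcnt_pairBeta {p : ℕ} {B : Finset ℕ} {ρ : ℕ → ℕ} {u v : ℕ}
    (hu : ρ u ∈ B) (hv : ρ v ∈ B) (huv : ρ u ≠ ρ v)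
    (hup : ρ u + p ∉ B) (hvp : ρ v + p ∉ B) (t : ℕ) :
    wcnt (pairBeta p B ρ u v) t = wcnt B t + wind (ρ u) p t + wind (ρ v) p t := by
  have h := wcnt_sdiff_union (B := B) (S := {ρ u, ρ v}) (T := {ρ u + p, ρ v + p})
    (by intro y hy; simp only [Finset.mem_insert, Finset.mem_singleton] at hy
        rcases hy with rfl | rfl <;> assumption)
    (by intro y hy; simp only [Finset.mem_insert, Finset.mem_singleton] at hy
        rcases hy with rfl | rfl <;> assumption) t
  rw [wcnt_pair_set huv, wcnt_pair_set (by omega)] at h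
  unfold pairBeta
  unfold wind
  split_ifs at h ⊢ <;> omega

lemma wcnt_oneBeta {p : ℕ} {B : Finset ℕ} {ρ : ℕ → ℕ} {u : ℕ}
    (hu : ρ u ∈ B) (hup : ρ u + 2 * p ∉ B) (t : ℕ) :
    wcnt (oneBeta p B ρ u) t = wcnt B t + wind (ρ u) p t + wind (ρ u + p) p t := by
  have h := wcnt_sdiff_union (B := B) (S := {ρ u}) (T := {ρ u + 2 * p})
    (by intro y hy; simp only [Finset.mem_singleton] at hy; subst hy; assumption)
    (by intro y hy; simp only [Finset.mem_singleton] at hy; subst hy; assumption) t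
  rw [wcnt_singleton, wcnt_singleton] at h
  unfold oneBeta
  unfold wind
  split_ifs at h ⊢ <;> omega

lemma wcnt_sqBeta {p : ℕ} {B : Finset ℕ} {ρ : ℕ → ℕ} {v : ℕ}
    (hv : ρ v - p ∈ B) (hvp : ρ v + p ∉ B) (hge : p ≤ ρ v) (t : ℕ) :
    wcnt (sqBeta p B ρ v) t = wcnt B t + wind (ρ v - p) p t + wind (ρ v) p t := by
  have h := wcnt_sdiff_union (B := B) (S := {ρ v - p}) (T := {ρ v + p})
    (by intro y hy; simp only [Finset.mem_singleton] at hy; subst hy; assumption)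
    (by intro y hy; simp only [Finset.mem_singleton] at hy; subst hy; assumption) t
  rw [wcnt_singleton, wcnt_singleton] at h
  unfold sqBeta
  unfold wind
  split_ifs at h ⊢ <;> omega

end Aux4
/-- `⌈i−1,j⌋ ⊴ ⌈i,j⌋`, and if `j ≤ p−2` then also
`⌈i−1,j⌋ ⊴ ⌈i−1,j+1⌋`. -/
theorem stmt13 (p : ℕ) (hp : p.Prime) (hodd : Odd p)
    (γ : PartitionNat) (hγ : IsCore p γ) (hsc : SelfConj γ)
    (N : ℕ) (hN : p ∣ N) (hNlen : γ.len + 2 * p ≤ N)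
    (ρ : ℕ → ℕ) (hρ : IsRho p N γ ρ)
    (i j : ℕ) (hi1 : 1 ≤ i) (hij : i ≤ j) (hj : j ≤ p - 1) (hi : i < p - 1)
    (lam1 : PartitionNat) (hlen1 : lam1.len ≤ N)
    (hβ1 : betaSet N lam1 = fayersBeta p (betaSet N γ) ρ (i - 1) j)
    (lam2 : PartitionNat) (hlen2 : lam2.len ≤ N)
    (hβ2 : betaSet N lam2 = fayersBeta p (betaSet N γ) ρ i j) :
    Dom lam1 lam2 ∧
    (∀ lam3 : PartitionNat, j ≤ p - 2 → lam3.len ≤ N →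
      betaSet N lam3 = fayersBeta p (betaSet N γ) ρ (i - 1) (j + 1) → Dom lam1 lam3) := by
  obtain ⟨hρmono, hρmm, hρsurj⟩ := hρ
  have hp0 : 0 < p := hp.pos
  have hp2 : 2 ≤ p := hp.two_le
  have hlenγ : γ.len ≤ N := by omega
  have hρmem : ∀ l, l < p → ρ l ∈ betaSet N γ := fun l hl => (hρmm l hl).1
  have hρmax : ∀ l, l < p → ∀ b ∈ betaSet N γ, b % p = ρ l % p → b ≤ ρ l :=
    fun l hl => (hρmm l hl).2
  have mρ : ∀ a b : ℕ, a ≤ b → b < p → ρ a ≤ ρ b := by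
    intro a b h hb
    rcases Nat.eq_or_lt_of_le h with h2 | h2
    · rw [h2]
    · exact le_of_lt (hρmono a b h2 hb)
  have hfull := runnerFull hp0 hγ hlenγ
  have hlow_mem : ∀ m, m + γ.len + 1 ≤ N → m ∈ betaSet N γ := by
    intro m hm
    apply mem_betaSet.mpr
    refine ⟨N - 1 - m, by omega, ?_⟩
    have h0 : γ.part (N - 1 - m) = 0 := part_eq_zero_of_len_le (by omega)
    omega
  have hρge : ∀ l, l < p → p ≤ ρ l := by
    intro l hl
    have hm : ρ l % p < p := Nat.mod_lt _ hp0
    have hmem : ρ l % p + p ∈ betaSet N γ := hlow_mem _ (by omega)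
    have hmod : (ρ l % p + p) % p = ρ l % p := by
      rw [Nat.add_mod_right]
      exact Nat.mod_mod_of_dvd _ dvd_rfl
    have := hρmax l hl _ hmem hmod
    omega
  have hBle : ∀ b ∈ betaSet N γ, b ≤ ρ (p-1) := by
    intro b hb
    obtain ⟨l, hl, hlr⟩ := hρsurj (b % p) (Nat.mod_lt _ hp0)
    exact le_trans (hρmax l hl b hb (by rw [hlr])) (mρ l (p-1) (by omega) (by omega))
  have hnm1 : ∀ l, l < p → ρ l + p ∉ betaSet N γ := by
    intro l hl hmem
    have := hρmax l hl _ hmem (Nat.add_mod_right _ _)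
    omega
  have hnm2 : ∀ l, l < p → ρ l + 2 * p ∉ betaSet N γ := by
    intro l hl hmem
    have h2 : (ρ l + 2 * p) % p = ρ l % p := by
      rw [show ρ l + 2 * p = ρ l + p + p by ring, Nat.add_mod_right, Nat.add_mod_right]
    have := hρmax l hl _ hmem h2
    omega
  have hwindow : ∀ b, b ∈ betaSet N γ → ∀ t, t < b →
      ∃ x, x ∈ betaSet N γ ∧ t < x ∧ x ≤ t + p := by
    intro b
    induction b using Nat.strong_induction_on with
    | _ b ih =>
      intro hb t ht
      by_cases hbt : b ≤ t + p
      · exact ⟨b, hb, ht, hbt⟩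
      · exact ih (b - p) (by omega) (hfull b hb (by omega)) t (by omega)
  have hdrop : ∀ l t, l < p → t < ρ l →
      wcnt (betaSet N γ) (t + p) + 1 ≤ wcnt (betaSet N γ) t := by
    intro l t hl ht
    obtain ⟨x, hxB, hx1, hx2⟩ := hwindow (ρ l) (hρmem l hl) t ht
    have hsub2 : insert x ((betaSet N γ).filter (fun y => t + p < y))
        ⊆ (betaSet N γ).filter (fun y => t < y) := by
      intro y hy
      simp only [Finset.mem_insert, Finset.mem_filter] at hy ⊢
      rcases hy with rfl | ⟨h1, h2⟩
      · exact ⟨hxB, hx1⟩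
      · exact ⟨h1, by omega⟩
    have hxn : x ∉ (betaSet N γ).filter (fun y => t + p < y) := by
      simp only [Finset.mem_filter]; omega
    have hcard := Finset.card_le_card hsub2
    rw [Finset.card_insert_of_notMem hxn] at hcard
    unfold wcnt
    exact hcard
  set M := ρ (p-1) + 2 * p + 1 with hM
  have hfitM : ∀ l, l < p → ρ l + 2 * p < M := by
    intro l hl
    have := mρ l (p-1) (by omega) (by omega)
    omega
  have pyr_lt : ∀ a b : ℕ, a ≤ b → pyr p ρ a b = 1 → b < p ∧ ρ b < ρ a + p := by
    intro a b hab h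
    unfold pyr at h
    split_ifs at h with h1 h2 h3
    · omega
    · have := mρ a b hab (by omega)
      omega
  have pyr_ge : ∀ a b : ℕ, a ≤ b → b < p → pyr p ρ a b ≠ 1 → ρ a + p ≤ ρ b := by
    intro a b hab hbp h
    unfold pyr at h
    split_ifs at h with h1 h2 h3
    · exact absurd rfl h
    · omega
    · exact absurd rfl h
    · have := mρ a b hab hbp
      omega
  have pyr_one : ∀ a b : ℕ, b < p → ρ b < ρ a + p → pyr p ρ a b = 1 := by
    intro a b h1 h2
    unfold pyr
    split_ifs <;> omega
  have bnd_pair : ∀ u v : ℕ, u < p → v < p → ∀ b ∈ pairBeta p (betaSet N γ) ρ u v, b < M := by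
    intro u v hu hv b hb
    unfold pairBeta at hb
    simp only [Finset.mem_union, Finset.mem_sdiff, Finset.mem_insert,
      Finset.mem_singleton] at hb
    rcases hb with ⟨h1, _⟩ | (rfl | rfl)
    · have := hBle b h1; omega
    · have := hfitM u hu; omega
    · have := hfitM v hv; omega
  have bnd_one : ∀ u : ℕ, u < p → ∀ b ∈ oneBeta p (betaSet N γ) ρ u, b < M := by
    intro u hu b hb
    unfold oneBeta at hb
    simp only [Finset.mem_union, Finset.mem_sdiff, Finset.mem_singleton] at hb
    rcases hb with ⟨h1, _⟩ | rfl
    · have := hBle b h1; omega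
    · have := hfitM u hu; omega
  have bnd_sq : ∀ v : ℕ, v < p → ∀ b ∈ sqBeta p (betaSet N γ) ρ v, b < M := by
    intro v hv b hb
    unfold sqBeta at hb
    simp only [Finset.mem_union, Finset.mem_sdiff, Finset.mem_singleton] at hb
    rcases hb with ⟨h1, _⟩ | rfl
    · have := hBle b h1; omega
    · have := hfitM v hv; omega
  have epair : ∀ u v : ℕ, u < p → v < p → u < v →
      ∀ t, wcnt (pairBeta p (betaSet N γ) ρ u v) t
        = wcnt (betaSet N γ) t + wind (ρ u) p t + wind (ρ v) p t := by
    intro u v hu hv huv t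
    exact wcnt_pairBeta (hρmem u hu) (hρmem v hv)
      (by have := hρmono u v huv hv; omega) (hnm1 u hu) (hnm1 v hv) t
  have eone : ∀ u : ℕ, u < p →
      ∀ t, wcnt (oneBeta p (betaSet N γ) ρ u) t
        = wcnt (betaSet N γ) t + wind (ρ u) p t + wind (ρ u + p) p t := by
    intro u hu t
    exact wcnt_oneBeta (hρmem u hu) (hnm2 u hu) t
  have esq : ∀ v : ℕ, v < p →
      ∀ t, wcnt (sqBeta p (betaSet N γ) ρ v) t
        = wcnt (betaSet N γ) t + wind (ρ v - p) p t + wind (ρ v) p t := by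
    intro v hv t
    exact wcnt_sqBeta (hfull _ (hρmem v hv) (hρge v hv)) (hnm1 v hv) (hρge v hv) t
  have build : ∀ (lamA lamB : PartitionNat), lamA.len ≤ N → lamB.len ≤ N →
      ∀ a1 b1 a2 b2 : ℕ,
      (∀ t, wcnt (betaSet N lamA) t = wcnt (betaSet N γ) t + wind a1 p t + wind b1 p t) →
      (∀ t, wcnt (betaSet N lamB) t = wcnt (betaSet N γ) t + wind a2 p t + wind b2 p t) →
      (∀ b ∈ betaSet N lamA, b < M) → (∀ b ∈ betaSet N lamB, b < M) →
      a1 ≤ b1 → a1 ≤ a2 → b1 ≤ b2 → (∃ l, l < p ∧ a2 ≤ ρ l) →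
      a2 + p ≤ M → b2 + p ≤ M → Dom lamA lamB := by
    intro lamA lamB hA hB a1 b1 a2 b2 e1 e2 m1 m2 hab haa hbb hwit hfa hfb
    exact dom_build hA hB M m1 m2 a1 b1 a2 b2 e1 e2 hdrop hab haa hbb hwit hfa hfb
  constructor
  · -- Dom lam1 lam2
    rcases Nat.eq_or_lt_of_le hij with hEQ | hLT
    · -- case i = j
      subst hEQ
      rw [fayersBeta, if_pos rfl] at hβ2
      rw [fayersBeta, if_neg (by omega : ¬ (i - 1 = i)),
        show i - 1 + 1 = i from by omega] at hβ1
      have hpii : pyr p ρ i i = 1 := pyr_one i i (by omega) (by omega)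
      by_cases hF : pyr p ρ (i+1) (i+2) = 1
      · rw [if_pos hF] at hβ2
        obtain ⟨hFp, hFlt⟩ := pyr_lt (i+1) (i+2) (by omega) hF
        by_cases hA : pyr p ρ (i-1) (i+1) = 1
        · -- L1
          rw [if_pos hA] at hβ1
          obtain ⟨hAp, hAlt⟩ := pyr_lt (i-1) (i+1) (by omega) hA
          exact build lam1 lam2 hlen1 hlen2 (ρ (i-1)) (ρ (i+1)) (ρ (i+1)) (ρ (i+2))
            (fun t => by rw [hβ1]; exact epair (i-1) (i+1) (by omega) (by omega) (by omega) t)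
            (fun t => by rw [hβ2]; exact epair (i+1) (i+2) (by omega) (by omega) (by omega) t)
            (by rw [hβ1]; exact bnd_pair _ _ (by omega) (by omega))
            (by rw [hβ2]; exact bnd_pair _ _ (by omega) (by omega))
            (mρ (i-1) (i+1) (by omega) (by omega))
            (mρ (i-1) (i+1) (by omega) (by omega))
            (mρ (i+1) (i+2) (by omega) (by omega))
            ⟨i+1, by omega, le_refl _⟩
            (by have := hfitM (i+1) (by omega); omega)
            (by have := hfitM (i+2) (by omega); omega)
        · rw [if_neg hA] at hβ1
          by_cases hB : pyr p ρ (i-1) i = 1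
          · -- L3
            rw [if_pos hB] at hβ1
            have hge : ρ (i-1) + p ≤ ρ (i+1) := pyr_ge (i-1) (i+1) (by omega) (by omega) hA
            exact build lam1 lam2 hlen1 hlen2 (ρ (i-1)) (ρ (i-1) + p) (ρ (i+1)) (ρ (i+2))
              (fun t => by rw [hβ1]; exact eone (i-1) (by omega) t)
              (fun t => by rw [hβ2]; exact epair (i+1) (i+2) (by omega) (by omega) (by omega) t)
              (by rw [hβ1]; exact bnd_one _ (by omega))
              (by rw [hβ2]; exact bnd_pair _ _ (by omega) (by omega))
              (by omega) (by omega)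
              (by have := mρ (i+1) (i+2) (by omega) (by omega); omega)
              ⟨i+1, by omega, le_refl _⟩
              (by have := hfitM (i+1) (by omega); omega)
              (by have := hfitM (i+2) (by omega); omega)
          · -- L5
            rw [if_neg hB, if_pos hpii] at hβ1
            exact build lam1 lam2 hlen1 hlen2 (ρ i - p) (ρ i) (ρ (i+1)) (ρ (i+2))
              (fun t => by rw [hβ1]; exact esq i (by omega) t)
              (fun t => by rw [hβ2]; exact epair (i+1) (i+2) (by omega) (by omega) (by omega) t)
              (by rw [hβ1]; exact bnd_sq _ (by omega))
              (by rw [hβ2]; exact bnd_pair _ _ (by omega) (by omega))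
              (by omega)
              (by have := mρ i (i+1) (by omega) (by omega); omega)
              (by have h1 := mρ i (i+1) (by omega) (by omega)
                  have h2 := mρ (i+1) (i+2) (by omega) (by omega); omega)
              ⟨i+1, by omega, le_refl _⟩
              (by have := hfitM (i+1) (by omega); omega)
              (by have := hfitM (i+2) (by omega); omega)
      · rw [if_neg hF] at hβ2
        by_cases hA : pyr p ρ (i-1) (i+1) = 1
        · -- L2
          rw [if_pos hA] at hβ1
          obtain ⟨hAp, hAlt⟩ := pyr_lt (i-1) (i+1) (by omega) hA
          exact build lam1 lam2 hlen1 hlen2 (ρ (i-1)) (ρ (i+1)) (ρ (i+1)) (ρ (i+1) + p)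
            (fun t => by rw [hβ1]; exact epair (i-1) (i+1) (by omega) (by omega) (by omega) t)
            (fun t => by rw [hβ2]; exact eone (i+1) (by omega) t)
            (by rw [hβ1]; exact bnd_pair _ _ (by omega) (by omega))
            (by rw [hβ2]; exact bnd_one _ (by omega))
            (mρ (i-1) (i+1) (by omega) (by omega))
            (mρ (i-1) (i+1) (by omega) (by omega))
            (by omega)
            ⟨i+1, by omega, le_refl _⟩
            (by have := hfitM (i+1) (by omega); omega)
            (by have := hfitM (i+1) (by omega); omega)
        · rw [if_neg hA] at hβ1
          by_cases hB : pyr p ρ (i-1) i = 1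
          · -- L4
            rw [if_pos hB] at hβ1
            have hle : ρ (i-1) ≤ ρ (i+1) := mρ (i-1) (i+1) (by omega) (by omega)
            exact build lam1 lam2 hlen1 hlen2 (ρ (i-1)) (ρ (i-1) + p) (ρ (i+1)) (ρ (i+1) + p)
              (fun t => by rw [hβ1]; exact eone (i-1) (by omega) t)
              (fun t => by rw [hβ2]; exact eone (i+1) (by omega) t)
              (by rw [hβ1]; exact bnd_one _ (by omega))
              (by rw [hβ2]; exact bnd_one _ (by omega))
              (by omega) (by omega) (by omega)
              ⟨i+1, by omega, le_refl _⟩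
              (by have := hfitM (i+1) (by omega); omega)
              (by have := hfitM (i+1) (by omega); omega)
          · -- L6
            rw [if_neg hB, if_pos hpii] at hβ1
            have hle : ρ i ≤ ρ (i+1) := mρ i (i+1) (by omega) (by omega)
            exact build lam1 lam2 hlen1 hlen2 (ρ i - p) (ρ i) (ρ (i+1)) (ρ (i+1) + p)
              (fun t => by rw [hβ1]; exact esq i (by omega) t)
              (fun t => by rw [hβ2]; exact eone (i+1) (by omega) t)
              (by rw [hβ1]; exact bnd_sq _ (by omega))
              (by rw [hβ2]; exact bnd_one _ (by omega))
              (by omega) (by omega) (by omega)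
              ⟨i+1, by omega, le_refl _⟩
              (by have := hfitM (i+1) (by omega); omega)
              (by have := hfitM (i+1) (by omega); omega)
    · -- case i < j
      rw [fayersBeta, if_neg (by omega : ¬ (i - 1 = j)),
        show i - 1 + 1 = i from by omega] at hβ1
      rw [fayersBeta, if_neg (by omega : ¬ (i = j))] at hβ2
      by_cases hC : pyr p ρ i (j+1) = 1
      · rw [if_pos hC] at hβ2
        obtain ⟨hCp, hClt⟩ := pyr_lt i (j+1) (by omega) hC
        have hρjlt : ρ j < ρ i + p := by
          have := hρmono j (j+1) (by omega) (by omega); omega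
        by_cases hA : pyr p ρ (i-1) (j+1) = 1
        · -- C1
          rw [if_pos hA] at hβ1
          exact build lam1 lam2 hlen1 hlen2 (ρ (i-1)) (ρ (j+1)) (ρ i) (ρ (j+1))
            (fun t => by rw [hβ1]; exact epair (i-1) (j+1) (by omega) (by omega) (by omega) t)
            (fun t => by rw [hβ2]; exact epair i (j+1) (by omega) (by omega) (by omega) t)
            (by rw [hβ1]; exact bnd_pair _ _ (by omega) (by omega))
            (by rw [hβ2]; exact bnd_pair _ _ (by omega) (by omega))
            (mρ (i-1) (j+1) (by omega) (by omega))
            (mρ (i-1) i (by omega) (by omega))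
            (le_refl _)
            ⟨i, by omega, le_refl _⟩
            (by have := hfitM i (by omega); omega)
            (by have := hfitM (j+1) (by omega); omega)
        · rw [if_neg hA] at hβ1
          by_cases hB : pyr p ρ (i-1) j = 1
          · -- C2
            rw [if_pos hB] at hβ1
            have hge : ρ (i-1) + p ≤ ρ (j+1) := pyr_ge (i-1) (j+1) (by omega) (by omega) hA
            exact build lam1 lam2 hlen1 hlen2 (ρ (i-1)) (ρ (i-1) + p) (ρ i) (ρ (j+1))
              (fun t => by rw [hβ1]; exact eone (i-1) (by omega) t)
              (fun t => by rw [hβ2]; exact epair i (j+1) (by omega) (by omega) (by omega) t)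
              (by rw [hβ1]; exact bnd_one _ (by omega))
              (by rw [hβ2]; exact bnd_pair _ _ (by omega) (by omega))
              (by omega)
              (mρ (i-1) i (by omega) (by omega))
              (by omega)
              ⟨i, by omega, le_refl _⟩
              (by have := hfitM i (by omega); omega)
              (by have := hfitM (j+1) (by omega); omega)
          · -- C3
            have hD : pyr p ρ i j = 1 := pyr_one i j (by omega) hρjlt
            rw [if_neg hB, if_pos hD] at hβ1
            exact build lam1 lam2 hlen1 hlen2 (ρ j - p) (ρ j) (ρ i) (ρ (j+1))
              (fun t => by rw [hβ1]; exact esq j (by omega) t)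
              (fun t => by rw [hβ2]; exact epair i (j+1) (by omega) (by omega) (by omega) t)
              (by rw [hβ1]; exact bnd_sq _ (by omega))
              (by rw [hβ2]; exact bnd_pair _ _ (by omega) (by omega))
              (by omega) (by omega)
              (by have := hρmono j (j+1) (by omega) (by omega); omega)
              ⟨i, by omega, le_refl _⟩
              (by have := hfitM i (by omega); omega)
              (by have := hfitM (j+1) (by omega); omega)
      · rw [if_neg hC] at hβ2
        have hA : ¬ pyr p ρ (i-1) (j+1) = 1 := by
          intro h
          obtain ⟨h1, h2⟩ := pyr_lt (i-1) (j+1) (by omega) h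
          have := mρ (i-1) i (by omega) (by omega)
          exact hC (pyr_one i (j+1) h1 (by omega))
        rw [if_neg hA] at hβ1
        by_cases hD : pyr p ρ i j = 1
        · rw [if_pos hD] at hβ2
          obtain ⟨hDp, hDlt⟩ := pyr_lt i j (by omega) hD
          by_cases hB : pyr p ρ (i-1) j = 1
          · -- C4
            rw [if_pos hB] at hβ1
            have hle : ρ (i-1) ≤ ρ i := mρ (i-1) i (by omega) (by omega)
            exact build lam1 lam2 hlen1 hlen2 (ρ (i-1)) (ρ (i-1) + p) (ρ i) (ρ i + p)
              (fun t => by rw [hβ1]; exact eone (i-1) (by omega) t)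
              (fun t => by rw [hβ2]; exact eone i (by omega) t)
              (by rw [hβ1]; exact bnd_one _ (by omega))
              (by rw [hβ2]; exact bnd_one _ (by omega))
              (by omega) (by omega) (by omega)
              ⟨i, by omega, le_refl _⟩
              (by have := hfitM i (by omega); omega)
              (by have := hfitM i (by omega); omega)
          · -- C5
            rw [if_neg hB, if_pos hD] at hβ1
            exact build lam1 lam2 hlen1 hlen2 (ρ j - p) (ρ j) (ρ i) (ρ i + p)
              (fun t => by rw [hβ1]; exact esq j (by omega) t)
              (fun t => by rw [hβ2]; exact eone i (by omega) t)
              (by rw [hβ1]; exact bnd_sq _ (by omega))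
              (by rw [hβ2]; exact bnd_one _ (by omega))
              (by omega) (by omega) (by omega)
              ⟨i, by omega, le_refl _⟩
              (by have := hfitM i (by omega); omega)
              (by have := hfitM i (by omega); omega)
        · rw [if_neg hD] at hβ2
          have hB : ¬ pyr p ρ (i-1) j = 1 := by
            intro h
            obtain ⟨h1, h2⟩ := pyr_lt (i-1) j (by omega) h
            have := mρ (i-1) i (by omega) (by omega)
            exact hD (pyr_one i j h1 (by omega))
          rw [if_neg hB, if_neg hD] at hβ1
          have hgeD : ρ i + p ≤ ρ j := pyr_ge i j (by omega) (by omega) hD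
          by_cases hE : pyr p ρ (i+1) j = 1
          · -- C6
            rw [if_pos hE] at hβ2
            exact build lam1 lam2 hlen1 hlen2 (ρ i) (ρ j) (ρ j - p) (ρ j)
              (fun t => by rw [hβ1]; exact epair i j (by omega) (by omega) (by omega) t)
              (fun t => by rw [hβ2]; exact esq j (by omega) t)
              (by rw [hβ1]; exact bnd_pair _ _ (by omega) (by omega))
              (by rw [hβ2]; exact bnd_sq _ (by omega))
              (by omega) (by omega) (le_refl _)
              ⟨j, by omega, by omega⟩
              (by have := hfitM j (by omega); omega)
              (by have := hfitM j (by omega); omega)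
          · -- C7
            rw [if_neg hE] at hβ2
            have hij2 : i + 1 < j := by
              rcases Nat.eq_or_lt_of_le (show i + 1 ≤ j by omega) with h | h
              · exact absurd (h ▸ pyr_one j j (by omega) (by omega)) (h ▸ hE)
              · exact h
            exact build lam1 lam2 hlen1 hlen2 (ρ i) (ρ j) (ρ (i+1)) (ρ j)
              (fun t => by rw [hβ1]; exact epair i j (by omega) (by omega) (by omega) t)
              (fun t => by rw [hβ2]; exact epair (i+1) j (by omega) (by omega) (by omega) t)
              (by rw [hβ1]; exact bnd_pair _ _ (by omega) (by omega))
              (by rw [hβ2]; exact bnd_pair _ _ (by omega) (by omega))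
              (by have := hρmono i j hLT (by omega); omega)
              (mρ i (i+1) (by omega) (by omega))
              (le_refl _)
              ⟨i+1, by omega, le_refl _⟩
              (by have := hfitM (i+1) (by omega); omega)
              (by have := hfitM j (by omega); omega)
  · -- Dom lam1 lam3
    intro lam3 hj2 hlen3 hβ3
    rw [fayersBeta, if_neg (by omega : ¬ (i - 1 = j)),
      show i - 1 + 1 = i from by omega] at hβ1
    rw [fayersBeta, if_neg (by omega : ¬ (i - 1 = j + 1)),
      show i - 1 + 1 = i from by omega] at hβ3
    by_cases hA : pyr p ρ (i-1) (j+1) = 1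
    · rw [if_pos hA] at hβ1
      obtain ⟨hAp, hAlt⟩ := pyr_lt (i-1) (j+1) (by omega) hA
      by_cases hA2 : pyr p ρ (i-1) (j+2) = 1
      · -- J1
        rw [if_pos hA2] at hβ3
        obtain ⟨hA2p, hA2lt⟩ := pyr_lt (i-1) (j+2) (by omega) hA2
        exact build lam1 lam3 hlen1 hlen3 (ρ (i-1)) (ρ (j+1)) (ρ (i-1)) (ρ (j+2))
          (fun t => by rw [hβ1]; exact epair (i-1) (j+1) (by omega) (by omega) (by omega) t)
          (fun t => by rw [hβ3]; exact epair (i-1) (j+2) (by omega) (by omega) (by omega) t)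
          (by rw [hβ1]; exact bnd_pair _ _ (by omega) (by omega))
          (by rw [hβ3]; exact bnd_pair _ _ (by omega) (by omega))
          (mρ (i-1) (j+1) (by omega) (by omega))
          (le_refl _)
          (mρ (j+1) (j+2) (by omega) (by omega))
          ⟨i-1, by omega, le_refl _⟩
          (by have := hfitM (i-1) (by omega); omega)
          (by have := hfitM (j+2) (by omega); omega)
      · -- J2
        rw [if_neg hA2, if_pos hA] at hβ3
        exact build lam1 lam3 hlen1 hlen3 (ρ (i-1)) (ρ (j+1)) (ρ (i-1)) (ρ (i-1) + p)
          (fun t => by rw [hβ1]; exact epair (i-1) (j+1) (by omega) (by omega) (by omega) t)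
          (fun t => by rw [hβ3]; exact eone (i-1) (by omega) t)
          (by rw [hβ1]; exact bnd_pair _ _ (by omega) (by omega))
          (by rw [hβ3]; exact bnd_one _ (by omega))
          (mρ (i-1) (j+1) (by omega) (by omega))
          (le_refl _)
          (by omega)
          ⟨i-1, by omega, le_refl _⟩
          (by have := hfitM (i-1) (by omega); omega)
          (by have := hfitM (i-1) (by omega); omega)
    · rw [if_neg hA] at hβ1
      have hA2 : ¬ pyr p ρ (i-1) (j+2) = 1 := by
        intro h
        obtain ⟨h1, h2⟩ := pyr_lt (i-1) (j+2) (by omega) h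
        have := hρmono (j+1) (j+2) (by omega) (by omega)
        exact hA (pyr_one (i-1) (j+1) (by omega) (by omega))
      rw [if_neg hA2] at hβ3
      by_cases hB : pyr p ρ (i-1) j = 1
      · rw [if_pos hB] at hβ1
        have hgeA : ρ (i-1) + p ≤ ρ (j+1) := pyr_ge (i-1) (j+1) (by omega) (by omega) hA
        rw [if_neg hA] at hβ3
        by_cases hC : pyr p ρ i (j+1) = 1
        · -- J3
          rw [if_pos hC] at hβ3
          exact build lam1 lam3 hlen1 hlen3 (ρ (i-1)) (ρ (i-1) + p) (ρ (j+1) - p) (ρ (j+1))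
            (fun t => by rw [hβ1]; exact eone (i-1) (by omega) t)
            (fun t => by rw [hβ3]; exact esq (j+1) (by omega) t)
            (by rw [hβ1]; exact bnd_one _ (by omega))
            (by rw [hβ3]; exact bnd_sq _ (by omega))
            (by omega) (by omega) (by omega)
            ⟨j+1, by omega, by omega⟩
            (by have := hfitM (j+1) (by omega); omega)
            (by have := hfitM (j+1) (by omega); omega)
        · -- J4
          rw [if_neg hC] at hβ3
          have hij3 : i < j + 1 := by omega
          exact build lam1 lam3 hlen1 hlen3 (ρ (i-1)) (ρ (i-1) + p) (ρ i) (ρ (j+1))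
            (fun t => by rw [hβ1]; exact eone (i-1) (by omega) t)
            (fun t => by rw [hβ3]; exact epair i (j+1) (by omega) (by omega) (by omega) t)
            (by rw [hβ1]; exact bnd_one _ (by omega))
            (by rw [hβ3]; exact bnd_pair _ _ (by omega) (by omega))
            (by omega)
            (mρ (i-1) i (by omega) (by omega))
            (by omega)
            ⟨i, by omega, le_refl _⟩
            (by have := hfitM i (by omega); omega)
            (by have := hfitM (j+1) (by omega); omega)
      · rw [if_neg hB] at hβ1
        rw [if_neg hA] at hβ3
        by_cases hD : pyr p ρ i j = 1
        · rw [if_pos hD] at hβ1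
          obtain ⟨hDp, hDlt⟩ := pyr_lt i j (by omega) hD
          by_cases hC : pyr p ρ i (j+1) = 1
          · -- J5
            rw [if_pos hC] at hβ3
            have hle : ρ j ≤ ρ (j+1) := mρ j (j+1) (by omega) (by omega)
            have hgej : p ≤ ρ j := hρge j (by omega)
            exact build lam1 lam3 hlen1 hlen3 (ρ j - p) (ρ j) (ρ (j+1) - p) (ρ (j+1))
              (fun t => by rw [hβ1]; exact esq j (by omega) t)
              (fun t => by rw [hβ3]; exact esq (j+1) (by omega) t)
              (by rw [hβ1]; exact bnd_sq _ (by omega))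
              (by rw [hβ3]; exact bnd_sq _ (by omega))
              (by omega) (by omega) (by omega)
              ⟨j+1, by omega, by omega⟩
              (by have := hfitM (j+1) (by omega); omega)
              (by have := hfitM (j+1) (by omega); omega)
          · -- J6
            rw [if_neg hC] at hβ3
            exact build lam1 lam3 hlen1 hlen3 (ρ j - p) (ρ j) (ρ i) (ρ (j+1))
              (fun t => by rw [hβ1]; exact esq j (by omega) t)
              (fun t => by rw [hβ3]; exact epair i (j+1) (by omega) (by omega) (by omega) t)
              (by rw [hβ1]; exact bnd_sq _ (by omega))
              (by rw [hβ3]; exact bnd_pair _ _ (by omega) (by omega))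
              (by omega) (by omega)
              (mρ j (j+1) (by omega) (by omega))
              ⟨i, by omega, le_refl _⟩
              (by have := hfitM i (by omega); omega)
              (by have := hfitM (j+1) (by omega); omega)
        · -- J7
          rw [if_neg hD] at hβ1
          have hC : ¬ pyr p ρ i (j+1) = 1 := by
            intro h
            obtain ⟨h1, h2⟩ := pyr_lt i (j+1) (by omega) h
            have := hρmono j (j+1) (by omega) (by omega)
            exact hD (pyr_one i j (by omega) (by omega))
          rw [if_neg hC] at hβ3
          have hLT : i < j := by
            rcases Nat.eq_or_lt_of_le hij with h | h
            · subst h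
              exact absurd (pyr_one i i (by omega) (by omega)) hD
            · exact h
          exact build lam1 lam3 hlen1 hlen3 (ρ i) (ρ j) (ρ i) (ρ (j+1))
            (fun t => by rw [hβ1]; exact epair i j (by omega) (by omega) (by omega) t)
            (fun t => by rw [hβ3]; exact epair i (j+1) (by omega) (by omega) (by omega) t)
            (by rw [hβ1]; exact bnd_pair _ _ (by omega) (by omega))
            (by rw [hβ3]; exact bnd_pair _ _ (by omega) (by omega))
            (by have := hρmono i j hLT (by omega); omega)
            (le_refl _)
            (mρ j (j+1) (by omega) (by omega))
            ⟨i, by omega, le_refl _⟩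
            (by have := hfitM i (by omega); omega)
            (by have := hfitM (j+1) (by omega); omega)

end ArxivW2
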